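/- Let Z have Hüsler-Reiss Pareto distribution HRPar_a(Q,l) with density f_a(z;Q,l) = C_a(Q,l)^{-1} exp(-½ (log z)ᵀQ(log z) + lᵀ log z) (∏ z_i^{-1}) 1_{z ≰ a}. Then for any u ∈ (0,∞)^d, the vector uZ (coordinatewise product) has distribution HRPar_{ua}(Q, l + Q log u), and the normalizing constants satisfy C_{ua}(Q, l + Q log u) = exp( ½ (log u)ᵀ Q (log u) + lᵀ log u ) C_a(Q,l). -/

import Mathlib

/-!
Multiplying `z` coordinatewise by `u` shifts `log z` by `log u`. Since `Q` is symmetric, the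
exponent `-½ xᵀQx + (l + Q log u)ᵀx` at `x = log u + log z` splits as the constant
`½ (log u)ᵀQ(log u) + lᵀ log u` plus the old exponent at `log z`, and `∏ (uᵢzᵢ)⁻¹` contributes
the factor `∏ uᵢ⁻¹`. So `f_{ua}(uz; Q, l + Q log u)` is `exp(…) ∏ uᵢ⁻¹ f_a(z; Q, l)`, and the
factor `∏ uᵢ⁻¹` is exactly the Jacobian of `z ↦ z / u`: integrating gives the relation between the
normalizing constants, and pushing the law of `Z` forward along `z ↦ uz` gives that of `uZ`.
-/

open MeasureTheory Matrix
open scoped ENNReal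

/-- Unnormalized Hüsler-Reiss Pareto density on `{z > 0 : z ≰ a}`. -/
noncomputable def hrDens {d : ℕ} (Q : Matrix (Fin d) (Fin d) ℝ) (l a : Fin d → ℝ)
    (z : Fin d → ℝ) : ℝ :=
  if (∀ i, 0 < z i) ∧ ¬ ∀ i, z i ≤ a i then
    Real.exp (-(1 / 2) *
        ((fun i => Real.log (z i)) ⬝ᵥ Q.mulVec fun i => Real.log (z i)) +
        l ⬝ᵥ fun i => Real.log (z i)) * ∏ i, (z i)⁻¹
  else 0

/-- Hüsler-Reiss Pareto normalizing constant `C_a(Q,l)`. -/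
noncomputable def hrC {d : ℕ} (Q : Matrix (Fin d) (Fin d) ℝ) (l a : Fin d → ℝ) : ℝ :=
  ∫ z, hrDens Q l a z

theorem MeasurableEquiv.map_withDensity {α β : Type*} [MeasurableSpace α] [MeasurableSpace β]
    (e : α ≃ᵐ β) (μ : Measure α) {f : α → ℝ≥0∞} (hf : Measurable f) :
    Measure.map e (μ.withDensity f) = (Measure.map e μ).withDensity (f ∘ e.symm) := by
  ext s hs
  rw [Measure.map_apply e.measurable hs, withDensity_apply _ (e.measurable hs),
    withDensity_apply _ hs, setLIntegral_map hs (hf.comp e.symm.measurable) e.measurable]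
  simp

section PiMulLeft

variable {ι : Type*} {u : ι → ℝ}

noncomputable def MeasurableEquiv.piMulLeft₀ (u : ι → ℝ) (hu : ∀ i, u i ≠ 0) :
    (ι → ℝ) ≃ᵐ (ι → ℝ) :=
  MeasurableEquiv.piCongrRight fun i => MeasurableEquiv.mulLeft₀ (u i) (hu i)

@[simp]
theorem MeasurableEquiv.coe_piMulLeft₀ (hu : ∀ i, u i ≠ 0) :
    ⇑(MeasurableEquiv.piMulLeft₀ u hu) = fun z i => u i * z i :=
  rfl

variable [Fintype ι]

theorem map_pi_mul_left_volume (hu : ∀ i, u i ≠ 0) :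
    Measure.map (fun (z : ι → ℝ) i => u i * z i) volume =
      ENNReal.ofReal |∏ i, u i|⁻¹ • volume := by
  classical
  have hdet := Real.map_matrix_volume_pi_eq_smul_volume_pi (M := diagonal u) (by
    rw [det_diagonal]; exact Finset.prod_ne_zero_iff.2 fun i _ => hu i)
  have hlin : ⇑(toLin' (diagonal u)) = fun z i => u i * z i := by
    ext z i
    simp [mulVec_diagonal]
  rwa [det_diagonal, abs_inv, hlin] at hdet

theorem integral_comp_pi_mul_left (hu : ∀ i, u i ≠ 0) (f : (ι → ℝ) → ℝ) :
    ∫ z : ι → ℝ, f (fun i => u i * z i) = |∏ i, u i|⁻¹ * ∫ z, f z := by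
  have hmap := integral_map_equiv (MeasurableEquiv.piMulLeft₀ u hu) (μ := volume) f
  rw [MeasurableEquiv.coe_piMulLeft₀, map_pi_mul_left_volume hu, integral_smul_measure,
    ENNReal.toReal_ofReal (by positivity), smul_eq_mul] at hmap
  exact hmap.symm

theorem map_pi_mul_left_withDensity (hu : ∀ i, u i ≠ 0) {f : (ι → ℝ) → ℝ≥0∞}
    (hf : Measurable f) :
    Measure.map (fun z i => u i * z i) (volume.withDensity f) =
      volume.withDensity fun z => ENNReal.ofReal |∏ i, u i|⁻¹ * f fun i => (u i)⁻¹ * z i := by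
  rw [← MeasurableEquiv.coe_piMulLeft₀ hu, MeasurableEquiv.map_withDensity _ _ hf,
    MeasurableEquiv.coe_piMulLeft₀, map_pi_mul_left_volume hu, withDensity_smul_measure,
    ← withDensity_smul' _ _ ENNReal.ofReal_ne_top]
  rfl

end PiMulLeft

theorem Matrix.IsSymm.neg_half_quadForm_add_of_shift {ι : Type*} [Fintype ι]
    {Q : Matrix ι ι ℝ} (hQ : Q.IsSymm) (l v x : ι → ℝ) :
    -(1 / 2) * ((v + x) ⬝ᵥ Q *ᵥ (v + x)) + (l + Q *ᵥ v) ⬝ᵥ (v + x) =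
      ((1 / 2) * (v ⬝ᵥ Q *ᵥ v) + l ⬝ᵥ v) + (-(1 / 2) * (x ⬝ᵥ Q *ᵥ x) + l ⬝ᵥ x) := by
  have hcomm : x ⬝ᵥ Q *ᵥ v = v ⬝ᵥ Q *ᵥ x := by
    rw [dotProduct_mulVec, ← mulVec_transpose, hQ.eq, dotProduct_comm]
  simp only [mulVec_add, add_dotProduct, dotProduct_add]
  rw [dotProduct_comm (Q *ᵥ v) v, dotProduct_comm (Q *ᵥ v) x, hcomm]
  ring

section HuslerReiss

variable {d : ℕ}

@[fun_prop]
theorem measurable_hrDens (Q : Matrix (Fin d) (Fin d) ℝ) (l a : Fin d → ℝ) :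
    Measurable (hrDens Q l a) := by
  unfold hrDens
  refine Measurable.ite ?_ (by fun_prop) measurable_const
  measurability

variable {Q : Matrix (Fin d) (Fin d) ℝ}

theorem hrDens_mul_left (hQ : Q.IsSymm) (l a : Fin d → ℝ) {u : Fin d → ℝ}
    (hu : ∀ i, 0 < u i) (z : Fin d → ℝ) :
    hrDens Q (l + Q *ᵥ fun i => Real.log (u i)) (fun i => u i * a i) (fun i => u i * z i) =
      Real.exp ((1 / 2) * ((fun i => Real.log (u i)) ⬝ᵥ Q *ᵥ fun i => Real.log (u i)) +
          l ⬝ᵥ fun i => Real.log (u i)) * (∏ i, u i)⁻¹ * hrDens Q l a z := by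
  have hsupp : ((∀ i, 0 < u i * z i) ∧ ¬∀ i, u i * z i ≤ u i * a i) ↔
      (∀ i, 0 < z i) ∧ ¬∀ i, z i ≤ a i := by
    simp [mul_pos_iff_of_pos_left, hu, mul_le_mul_iff_right₀]
  unfold hrDens
  rw [if_congr hsupp rfl rfl]
  split_ifs with hz
  · have hlog : (fun i => Real.log (u i * z i)) =
        (fun i => Real.log (u i)) + fun i => Real.log (z i) := by
      ext i
      exact Real.log_mul (hu i).ne' (hz.1 i).ne'
    simp only [hlog, hQ.neg_half_quadForm_add_of_shift, Real.exp_add, mul_inv,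
      Finset.prod_mul_distrib, Finset.prod_inv_distrib]
    ring
  · simp

theorem hrC_mul_left (hQ : Q.IsSymm) (l a : Fin d → ℝ) {u : Fin d → ℝ} (hu : ∀ i, 0 < u i) :
    hrC Q (l + Q *ᵥ fun i => Real.log (u i)) (fun i => u i * a i) =
      Real.exp ((1 / 2) * ((fun i => Real.log (u i)) ⬝ᵥ Q *ᵥ fun i => Real.log (u i)) +
          l ⬝ᵥ fun i => Real.log (u i)) * hrC Q l a := by
  have hprod : 0 < ∏ i, u i := Finset.prod_pos fun i _ => hu i
  have hcov := integral_comp_pi_mul_left (fun i => (hu i).ne')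
    (hrDens Q (l + Q *ᵥ fun i => Real.log (u i)) fun i => u i * a i)
  simp only [hrDens_mul_left hQ l a hu, integral_const_mul, abs_of_pos hprod] at hcov
  unfold hrC
  refine mul_left_cancel₀ (inv_ne_zero hprod.ne') ?_
  rw [← hcov]
  ring

end HuslerReiss

theorem hr_pareto_scale_transform
    {Ω : Type*} [MeasurableSpace Ω] (μ : Measure Ω)
    {d : ℕ}
    (Q : Matrix (Fin d) (Fin d) ℝ) (l a : Fin d → ℝ)
    (hQ : Q.PosSemidef)
    (Z : Ω → Fin d → ℝ) (hZ : Measurable Z)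
    (hdist : Measure.map Z μ =
      volume.withDensity fun z => ENNReal.ofReal ((hrC Q l a)⁻¹ * hrDens Q l a z))
    (u : Fin d → ℝ) (hu : ∀ i, 0 < u i) :
    (Measure.map (fun ω i => u i * Z ω i) μ =
      volume.withDensity fun z => ENNReal.ofReal
        ((hrC Q (l + Q.mulVec fun i => Real.log (u i)) (fun i => u i * a i))⁻¹ *
          hrDens Q (l + Q.mulVec fun i => Real.log (u i)) (fun i => u i * a i) z)) ∧
    hrC Q (l + Q.mulVec fun i => Real.log (u i)) (fun i => u i * a i) =
      Real.exp ((1 / 2) *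
          ((fun i => Real.log (u i)) ⬝ᵥ Q.mulVec fun i => Real.log (u i)) +
          l ⬝ᵥ fun i => Real.log (u i)) * hrC Q l a := by
  have hsymm : Q.IsSymm := isHermitian_iff_isSymm.mp hQ.isHermitian
  have hC := hrC_mul_left hsymm l a hu
  refine ⟨?_, hC⟩
  have hprod : 0 < ∏ i, u i := Finset.prod_pos fun i _ => hu i
  rw [show (fun ω i => u i * Z ω i) = (fun z i => u i * z i) ∘ Z from rfl,
    ← Measure.map_map (by fun_prop) hZ, hdist,
    map_pi_mul_left_withDensity (fun i => (hu i).ne') (by fun_prop)]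
  congr 1 with z
  have hdens := hrDens_mul_left hsymm l a hu fun i => (u i)⁻¹ * z i
  rw [show (fun i => u i * ((u i)⁻¹ * z i)) = z from
    funext fun i => mul_inv_cancel_left₀ (hu i).ne' (z i)] at hdens
  rw [← ENNReal.ofReal_mul (by positivity), hC, hdens, abs_of_pos hprod]
  congr 1
  field_simp
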